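/- arXiv:1312.2752 — 3 statements merged into one kernel-verified Lean document; each statement's English description precedes it below -/
import Mathlib

section
/- Let A be a circulant tensor whose associated tensor Ā_1 is nonnegative (all entries ≥ 0). Then λ_0(A), the sum of all entries of the root tensor, is the largest H-eigenvalue of A. If instead Ā_1 is non-positive, λ_0(A) is the smallest H-eigenvalue of A. -/
/-!
The all-ones vector is an eigenvector of a circulant tensor, with eigenvalue the common row sum
`λ₀`. Conversely, the Geršgorin theorem for tensors puts every H-eigenvalue `λ` at distance at
most `R = ∑_{t ≠ 0} |α_t|` from the diagonal entry `c = α_0`, which is the same in every row of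
a circulant tensor. If the off-diagonal entries are nonnegative then `c + R = λ₀`, so `λ ≤ λ₀`;
if they are non-positive then `c - R = λ₀`, so `λ₀ ≤ λ`.
-/

open BigOperators

/-- `λ` is an H-eigenvalue of the order-`(m+1)` tensor `A` if `A x^m = λ x^{[m]}` for some
real `x ≠ 0`. -/
def IsHEig (m n : ℕ) (A : (Fin (m + 1) → Fin n) → ℝ) (lam : ℝ) : Prop :=
  ∃ x : Fin n → ℝ, x ≠ 0 ∧ ∀ j : Fin n,
    ∑ t : Fin m → Fin n, A (Fin.cons j t) * ∏ l, x (t l) = lam * x j ^ m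

open Finset

/-- Geršgorin's theorem for tensors, read off the row of a coordinate of maximal modulus of the
eigenvector. -/
theorem IsHEig.exists_abs_sub_le {m n : ℕ} {A : (Fin (m + 1) → Fin n) → ℝ} {lam : ℝ}
    (h : IsHEig m n A lam) :
    ∃ j : Fin n, |lam - A (Fin.cons j fun _ => j)| ≤
      ∑ t ∈ univ.erase (fun _ => j), |A (Fin.cons j t)| := by
  obtain ⟨x, hx0, hx⟩ := h
  obtain ⟨i, hi⟩ := Function.ne_iff.mp hx0
  have : Nonempty (Fin n) := ⟨i⟩
  obtain ⟨j, hj⟩ := Finite.exists_max fun i => |x i|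
  have hxj : 0 < |x j| ^ m := pow_pos ((abs_pos.mpr hi).trans_le (hj i)) m
  refine ⟨j, le_of_mul_le_mul_right ?_ hxj⟩
  have hrow : (lam - A (Fin.cons j fun _ => j)) * x j ^ m =
      ∑ t ∈ univ.erase (fun _ => j), A (Fin.cons j t) * ∏ l, x (t l) := by
    have := hx j
    rw [← add_sum_erase _ _ (mem_univ fun _ => j)] at this
    simp only [prod_const, card_univ, Fintype.card_fin] at this
    linarith
  calc |lam - A (Fin.cons j fun _ => j)| * |x j| ^ m
      = |∑ t ∈ univ.erase (fun _ => j), A (Fin.cons j t) * ∏ l, x (t l)| := by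
        rw [← hrow, abs_mul, abs_pow]
    _ ≤ ∑ t ∈ univ.erase (fun _ => j), |A (Fin.cons j t)| * |x j| ^ m := by
        refine (abs_sum_le_sum_abs _ _).trans (sum_le_sum fun t _ => ?_)
        rw [abs_mul, abs_prod]
        gcongr
        calc ∏ l, |x (t l)| ≤ ∏ _l : Fin m, |x j| := prod_le_prod (by simp) fun l _ => hj _
          _ = |x j| ^ m := by simp
    _ = (∑ t ∈ univ.erase (fun _ => j), |A (Fin.cons j t)|) * |x j| ^ m := (sum_mul ..).symm

section Circulant

variable {m n : ℕ} [NeZero n] {A : (Fin (m + 1) → Fin n) → ℝ}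
  (hA : ∀ j : Fin (m + 1) → Fin n, A j = A (fun l => j l + 1))
include hA

open Fin.NatCast in
theorem circulant_apply_add_const (k : Fin n) (v : Fin (m + 1) → Fin n) :
    A (fun l => v l + k) = A v := by
  have hper : Function.Periodic A fun _ => 1 := fun v => (hA v).symm
  convert hper.nsmul k.val v using 2
  funext l
  simp

theorem circulant_cons_add_const (j : Fin n) (t : Fin m → Fin n) :
    A (Fin.cons j fun l => t l + j) = A (Fin.cons 0 t) := by
  rw [← circulant_apply_add_const hA j (Fin.cons 0 t)]
  congr 1
  ext l
  cases l using Fin.cases <;> simp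

theorem circulant_sum_row {M : Type*} [AddCommMonoid M] (f : ℝ → M) (j : Fin n) :
    ∑ t, f (A (Fin.cons j t)) = ∑ t, f (A (Fin.cons 0 t)) := by
  rw [← Equiv.sum_comp (Equiv.addRight fun _ => j) fun t => f (A (Fin.cons j t))]
  exact sum_congr rfl fun t _ => congrArg f (circulant_cons_add_const hA j t)

theorem circulant_sum_offDiag_abs (j : Fin n) :
    ∑ t ∈ univ.erase (fun _ => j), |A (Fin.cons j t)| =
      ∑ t ∈ univ.erase 0, |A (Fin.cons 0 t)| := by
  have hdiag := circulant_cons_add_const hA j 0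
  simp only [Pi.zero_apply, zero_add] at hdiag
  rw [sum_erase_eq_sub (mem_univ _), sum_erase_eq_sub (mem_univ _),
    circulant_sum_row hA abs j, hdiag]

theorem isHEig_sum_cons_zero : IsHEig m n A (∑ t, A (Fin.cons 0 t)) := by
  refine ⟨1, one_ne_zero, fun j => ?_⟩
  simpa using circulant_sum_row hA id j

theorem IsHEig.abs_sub_le_of_circulant {lam : ℝ} (h : IsHEig m n A lam) :
    |lam - A (Fin.cons 0 0)| ≤ ∑ t ∈ univ.erase 0, |A (Fin.cons 0 t)| := by
  obtain ⟨j, hj⟩ := h.exists_abs_sub_le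
  have hdiag := circulant_cons_add_const hA j 0
  simp only [Pi.zero_apply, zero_add] at hdiag
  rwa [hdiag, circulant_sum_offDiag_abs hA] at hj

end Circulant

/-- If the associated tensor of a circulant tensor `A` is nonnegative, then
`λ₀(A) = ∑ α_{j_1...j_m}` is the largest H-eigenvalue of `A`; if the associated tensor is
non-positive, then `λ₀(A)` is the smallest H-eigenvalue of `A`. -/
theorem stmt_7 (m n : ℕ) [NeZero n] (A : (Fin (m + 1) → Fin n) → ℝ)
    (hA : ∀ j : Fin (m + 1) → Fin n, A j = A (fun l => j l + 1)) :
    ((∀ t : Fin m → Fin n, t ≠ (fun _ => 0) → 0 ≤ A (Fin.cons 0 t)) →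
      IsHEig m n A (∑ t : Fin m → Fin n, A (Fin.cons 0 t)) ∧
        ∀ lam : ℝ, IsHEig m n A lam → lam ≤ ∑ t : Fin m → Fin n, A (Fin.cons 0 t)) ∧
    ((∀ t : Fin m → Fin n, t ≠ (fun _ => 0) → A (Fin.cons 0 t) ≤ 0) →
      IsHEig m n A (∑ t : Fin m → Fin n, A (Fin.cons 0 t)) ∧
        ∀ lam : ℝ, IsHEig m n A lam → (∑ t : Fin m → Fin n, A (Fin.cons 0 t)) ≤ lam) := by
  have hsplit := add_sum_erase univ (fun t => A (Fin.cons 0 t)) (mem_univ 0)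
  refine ⟨fun hpos => ⟨isHEig_sum_cons_zero hA, fun lam h => ?_⟩,
    fun hneg => ⟨isHEig_sum_cons_zero hA, fun lam h => ?_⟩⟩
  · have hR : ∑ t ∈ univ.erase 0, |A (Fin.cons 0 t)| = ∑ t ∈ univ.erase 0, A (Fin.cons 0 t) :=
      sum_congr rfl fun t ht => abs_of_nonneg (hpos t (ne_of_mem_erase ht))
    linarith [(abs_le.mp (h.abs_sub_le_of_circulant hA)).2]
  · have hR : ∑ t ∈ univ.erase 0, |A (Fin.cons 0 t)| = -∑ t ∈ univ.erase 0, A (Fin.cons 0 t) := by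
      rw [← sum_neg_distrib]
      exact sum_congr rfl fun t ht => abs_of_nonpos (hneg t (ne_of_mem_erase ht))
    linarith [(abs_le.mp (h.abs_sub_le_of_circulant hA)).1]
end

section
/- Let n be even and A ∈ C_{m,n} a circulant tensor whose associated tensor Ā_1 is alternative. Then the alternative native eigenvalue λ_{n/2}(A) = Σ ᾱ_{j_1...j_{m-1}}(−1)^{j_1+···+j_{m-1}−m+1} + c_0 is the largest H-eigenvalue of A. If Ā_1 is negatively alternative, λ_{n/2}(A) is the smallest H-eigenvalue of A. -/
open BigOperators

/-!
The alternating vector `s j = (-1)^j` is well defined on `ℤ/n` because `n` is even, and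
circulancy turns the eigen-equation at row `j` into `(-1)^{jm}` times the one at row `0`, whose
value is `λ_{n/2}(A)`. For every H-eigenvalue `λ`, Gershgorin's theorem at a row where `|x|` is
maximal, transported to row `0` by circulancy, gives `|λ - c₀| ≤ ∑_{t ≠ 0} |A (0, t)|`; if `Ā₁`
is alternative the right-hand side is exactly `λ_{n/2}(A) - c₀`. The negatively alternative case
is the alternative one for `-A`.
-/

namespace IsHEig

variable {m n : ℕ} {A : (Fin (m + 1) → Fin n) → ℝ} {lam : ℝ}

theorem neg (h : IsHEig m n A lam) : IsHEig m n (-A) (-lam) := by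
  obtain ⟨x, hx, heq⟩ := h
  refine ⟨x, hx, fun j => ?_⟩
  simp only [Pi.neg_apply, neg_mul, Finset.sum_neg_distrib, heq]

theorem exists_abs_sub_diag_le (h : IsHEig m n A lam) :
    ∃ j : Fin n, |lam - A (Fin.cons j fun _ => j)| ≤
      ∑ t ∈ Finset.univ.erase (fun _ => j), |A (Fin.cons j t)| := by
  obtain ⟨x, hx, hxe⟩ := h
  obtain ⟨i, hi⟩ := Function.ne_iff.mp hx
  obtain ⟨j, -, hj⟩ := Finset.exists_max_image Finset.univ (fun j => |x j|) ⟨i, Finset.mem_univ _⟩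
  have hpos : 0 < |x j| ^ m := pow_pos ((abs_pos.mpr hi).trans_le (hj i (Finset.mem_univ _))) m
  have hsplit : (lam - A (Fin.cons j fun _ => j)) * x j ^ m =
      ∑ t ∈ Finset.univ.erase (fun _ => j), A (Fin.cons j t) * ∏ l, x (t l) := by
    rw [Finset.sum_erase_eq_sub (Finset.mem_univ _), hxe j, Finset.prod_const, Finset.card_univ,
      Fintype.card_fin]
    ring
  refine ⟨j, le_of_mul_le_mul_right ?_ hpos⟩
  calc |lam - A (Fin.cons j fun _ => j)| * |x j| ^ m
      = |∑ t ∈ Finset.univ.erase (fun _ => j), A (Fin.cons j t) * ∏ l, x (t l)| := by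
        rw [← hsplit, abs_mul, abs_pow]
    _ ≤ ∑ t ∈ Finset.univ.erase (fun _ => j), |A (Fin.cons j t)| * |x j| ^ m := by
        refine (Finset.abs_sum_le_sum_abs _ _).trans (Finset.sum_le_sum fun t _ => ?_)
        rw [abs_mul, Finset.abs_prod]
        gcongr
        calc ∏ l, |x (t l)| ≤ ∏ _l : Fin m, |x j| :=
              Finset.prod_le_prod (fun _ _ => abs_nonneg _) fun l _ => hj (t l) (Finset.mem_univ _)
          _ = |x j| ^ m := by simp
    _ = _ := (Finset.sum_mul _ _ _).symm

end IsHEig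

theorem Fin.neg_one_pow_val_add {n : ℕ} (hn : Even n) (a b : Fin n) :
    (-1 : ℝ) ^ ((a + b : Fin n) : ℕ) = (-1 : ℝ) ^ (a : ℕ) * (-1 : ℝ) ^ (b : ℕ) := by
  rw [← pow_add, neg_one_pow_eq_pow_mod_two ((a : ℕ) + b),
    neg_one_pow_eq_pow_mod_two ((a + b : Fin n) : ℕ), Fin.val_add,
    Nat.mod_mod_of_dvd _ hn.two_dvd]

section Circulant

variable {m n : ℕ} [NeZero n]

def IsCirculant (A : (Fin (m + 1) → Fin n) → ℝ) : Prop :=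
  ∀ j : Fin (m + 1) → Fin n, A j = A (fun l => j l + 1)

/-- The value `λ_{n/2}(A)` of the H-eigenvalue belonging to the alternating vector, read off
row `0` of `A`. -/
def altNativeEig (A : (Fin (m + 1) → Fin n) → ℝ) : ℝ :=
  ∑ t : Fin m → Fin n, A (Fin.cons 0 t) * (-1 : ℝ) ^ (∑ l, (t l : ℕ))

def IsAlternative (A : (Fin (m + 1) → Fin n) → ℝ) : Prop :=
  ∀ t : Fin m → Fin n, t ≠ (fun _ => 0) → 0 ≤ A (Fin.cons 0 t) * (-1 : ℝ) ^ (∑ l, (t l : ℕ))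

theorem altNativeEig_neg (A : (Fin (m + 1) → Fin n) → ℝ) :
    altNativeEig (-A) = -altNativeEig A := by
  simp only [altNativeEig, Pi.neg_apply, neg_mul, Finset.sum_neg_distrib]

namespace IsCirculant

variable {A : (Fin (m + 1) → Fin n) → ℝ}

theorem neg (hA : IsCirculant A) : IsCirculant (-A) :=
  fun j => congrArg Neg.neg (hA j)

open Fin.NatCast in
theorem apply_add_const (hA : IsCirculant A) (w : Fin (m + 1) → Fin n) (c : Fin n) :
    A (fun l => w l + c) = A w := by
  have key : ∀ k : ℕ, A (fun l => w l + (k : Fin n)) = A w := by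
    intro k
    induction k with
    | zero => simp
    | succ k ih =>
      rw [← ih, hA (fun l => w l + (k : Fin n))]
      simp only [Nat.cast_succ, add_assoc]
  simpa only [Fin.cast_val_eq_self] using key c

theorem cons_add_const (hA : IsCirculant A) (a c : Fin n) (t : Fin m → Fin n) :
    A (Fin.cons (a + c) fun l => t l + c) = A (Fin.cons a t) := by
  rw [← hA.apply_add_const (Fin.cons a t) c]
  congr 1
  funext i
  refine Fin.cases ?_ (fun i => ?_) i <;> simp

theorem diag_eq (hA : IsCirculant A) (j : Fin n) :
    A (Fin.cons j fun _ => j) = A (Fin.cons 0 fun _ => 0) := by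
  simpa using hA.cons_add_const 0 j fun _ => 0

theorem sum_row_eq (hA : IsCirculant A) (j : Fin n) (F : (Fin m → Fin n) → ℝ → ℝ) :
    ∑ t : Fin m → Fin n, F t (A (Fin.cons j t)) =
      ∑ t : Fin m → Fin n, F (fun l => t l + j) (A (Fin.cons 0 t)) := by
  refine (Fintype.sum_equiv (Equiv.piCongrRight fun _ => Equiv.addRight j) _ _ fun t => ?_).symm
  have hshift := hA.cons_add_const 0 j t
  rw [zero_add] at hshift
  exact congrArg (F fun l => t l + j) hshift.symm

theorem abs_sub_diag_le {lam : ℝ} (hA : IsCirculant A) (h : IsHEig m n A lam) :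
    |lam - A (Fin.cons 0 fun _ => 0)| ≤
      ∑ t ∈ Finset.univ.erase (fun _ => 0), |A (Fin.cons 0 t)| := by
  obtain ⟨j, hj⟩ := h.exists_abs_sub_diag_le
  rw [Finset.sum_erase_eq_sub (Finset.mem_univ _), hA.sum_row_eq j fun _ => abs,
    hA.diag_eq] at hj
  rwa [Finset.sum_erase_eq_sub (Finset.mem_univ _)]

theorem isHEig_altNativeEig (hn : Even n) (hA : IsCirculant A) :
    IsHEig m n A (altNativeEig A) := by
  refine ⟨fun j => (-1 : ℝ) ^ (j : ℕ), fun h => by simpa using congrFun h 0, fun j => ?_⟩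
  rw [hA.sum_row_eq j fun t a => a * ∏ l, (-1 : ℝ) ^ (t l : ℕ), altNativeEig, Finset.sum_mul]
  refine Finset.sum_congr rfl fun t _ => ?_
  simp only [Fin.neg_one_pow_val_add hn, Finset.prod_mul_distrib]
  rw [Finset.prod_pow_eq_pow_sum, Finset.prod_const, Finset.card_univ, Fintype.card_fin]
  ring

theorem le_altNativeEig {lam : ℝ} (hA : IsCirculant A) (halt : IsAlternative A)
    (h : IsHEig m n A lam) : lam ≤ altNativeEig A := by
  have hrow : ∑ t ∈ Finset.univ.erase (fun _ => 0), |A (Fin.cons 0 t)| =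
      altNativeEig A - A (Fin.cons 0 fun _ => 0) := by
    rw [altNativeEig, ← Finset.add_sum_erase _ _ (Finset.mem_univ fun _ => 0)]
    simp only [Fin.val_zero, Finset.sum_const_zero, pow_zero, mul_one, add_sub_cancel_left]
    refine Finset.sum_congr rfl fun t ht => ?_
    rw [← abs_of_nonneg (halt t (Finset.ne_of_mem_erase ht)), abs_mul, abs_pow, abs_neg, abs_one,
      one_pow, mul_one]
  linarith [(abs_le.mp (hrow ▸ hA.abs_sub_diag_le h)).2]

end IsCirculant

end Circulant

/-- Let `n` be even and `A ∈ C_{m+1,n}` circulant. If the associated tensor `Ā₁` is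
alternative, the alternative native eigenvalue
`λ_{n/2}(A) = ∑ α_{j_1...j_m}(−1)^{j_1+⋯+j_m−m}` is the largest H-eigenvalue of `A`;
if `Ā₁` is negatively alternative, `λ_{n/2}(A)` is the smallest H-eigenvalue of `A`. -/
theorem stmt_10 (m n : ℕ) [NeZero n] (hn : Even n) (A : (Fin (m + 1) → Fin n) → ℝ)
    (hA : ∀ j : Fin (m + 1) → Fin n, A j = A (fun l => j l + 1)) :
    ((∀ t : Fin m → Fin n, t ≠ (fun _ => 0) →
        0 ≤ A (Fin.cons 0 t) * (-1 : ℝ) ^ (∑ l, (t l : ℕ))) →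
      IsHEig m n A (∑ t : Fin m → Fin n, A (Fin.cons 0 t) * (-1 : ℝ) ^ (∑ l, (t l : ℕ))) ∧
        ∀ lam : ℝ, IsHEig m n A lam →
          lam ≤ ∑ t : Fin m → Fin n, A (Fin.cons 0 t) * (-1 : ℝ) ^ (∑ l, (t l : ℕ))) ∧
    ((∀ t : Fin m → Fin n, t ≠ (fun _ => 0) →
        A (Fin.cons 0 t) * (-1 : ℝ) ^ (∑ l, (t l : ℕ)) ≤ 0) →
      IsHEig m n A (∑ t : Fin m → Fin n, A (Fin.cons 0 t) * (-1 : ℝ) ^ (∑ l, (t l : ℕ))) ∧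
        ∀ lam : ℝ, IsHEig m n A lam →
          (∑ t : Fin m → Fin n, A (Fin.cons 0 t) * (-1 : ℝ) ^ (∑ l, (t l : ℕ))) ≤ lam) := by
  have hcirc : IsCirculant A := hA
  have heig : IsHEig m n A (altNativeEig A) := hcirc.isHEig_altNativeEig hn
  refine ⟨fun halt => ⟨heig, fun lam h => hcirc.le_altNativeEig halt h⟩,
    fun hneg => ⟨heig, fun lam h => ?_⟩⟩
  have halt : IsAlternative (-A) := fun t ht => by
    simpa only [Pi.neg_apply, neg_mul, neg_nonneg] using hneg t ht
  have := hcirc.neg.le_altNativeEig halt h.neg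
  rw [altNativeEig_neg] at this
  exact neg_le_neg_iff.mp this
end

section
/- Let m be even and A ∈ C_{m,n} a circulant tensor with diagonal entry c_0 and root tensor A_1 = (α_{j_1...j_{m-1}}). If c_0 ≥ Σ_{(j_1,...,j_{m-1}) ≠ (1,...,1)} |α_{j_1...j_{m-1}}| (equivalently 2c_0 ≥ Σ over all indices of |α|), then A is positive semi-definite. -/
/-!
Writing a multi-index as `j = (i, t₁ + i, …, t_m + i)`, circulance gives
`A x^{m+1} = ∑_t α_t S_t` with `S_t = ∑_i ∏_l x(c_l + i)`, `c = (0, t)`. By AM-GM and the fact that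
each shift `i ↦ c_l + i` permutes the coordinates, `|S_t| ≤ ∑_i |x_i|^{m+1}`, with equality
`S_0 = ∑_i |x_i|^{m+1}` because the order is even. Diagonal dominance then makes the sum nonnegative.
-/

open Finset

lemma prod_le_sum_pow_card_div_card {ι : Type*} [Fintype ι] [Nonempty ι] (a : ι → ℝ)
    (ha : ∀ i, 0 ≤ a i) :
    ∏ i, a i ≤ (∑ i, a i ^ Fintype.card ι) / Fintype.card ι := by
  set N := Fintype.card ι
  have hN : (N : ℝ) ≠ 0 := Nat.cast_ne_zero.mpr Fintype.card_ne_zero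
  have hroot (i : ι) : (a i ^ N) ^ (1 / (N : ℝ)) = a i := by
    rw [← Real.rpow_natCast, ← Real.rpow_mul (ha i), mul_one_div_cancel hN, Real.rpow_one]
  calc ∏ i, a i = ∏ i, (a i ^ N) ^ (1 / (N : ℝ)) := by simp only [hroot]
    _ ≤ ∑ i, 1 / (N : ℝ) * a i ^ N :=
      Real.geom_mean_le_arith_mean_weighted _ _ _ (fun _ _ => by positivity)
        (by simp [N, hN]) (fun i _ => pow_nonneg (ha i) N)
    _ = (∑ i, a i ^ N) / N := by rw [← mul_sum]; ring

lemma abs_sum_prod_add_le_sum_abs_pow {G : Type*} [AddGroup G] [Fintype G] {N : ℕ}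
    (x : G → ℝ) (c : Fin N → G) :
    |∑ i, ∏ l, x (c l + i)| ≤ ∑ i, |x i| ^ N := by
  rcases N.eq_zero_or_pos with rfl | hN
  · simp
  have : Nonempty (Fin N) := ⟨⟨0, hN⟩⟩
  have hshift (l : Fin N) : ∑ i, |x (c l + i)| ^ N = ∑ i, |x i| ^ N :=
    Equiv.sum_comp (Equiv.addLeft (c l)) fun i => |x i| ^ N
  calc |∑ i, ∏ l, x (c l + i)| ≤ ∑ i, ∏ l, |x (c l + i)| := by
        simpa only [abs_prod] using abs_sum_le_sum_abs (fun i => ∏ l, x (c l + i)) univ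
    _ ≤ ∑ i, (∑ l, |x (c l + i)| ^ N) / N := by
        gcongr with i
        simpa using prod_le_sum_pow_card_div_card (fun l => |x (c l + i)|) fun _ => abs_nonneg _
    _ = ∑ i, |x i| ^ N := by
        rw [← sum_div, sum_comm]
        simp only [hshift, sum_const, card_univ, Fintype.card_fin, nsmul_eq_mul]
        field_simp

lemma apply_add_const_of_apply_add_one {ι R : Type*} {n : ℕ} [NeZero n]
    {A : (ι → Fin n) → R} (hA : ∀ j, A j = A (fun l => j l + 1)) (j : ι → Fin n) (k : Fin n) :
    A (fun l => j l + k) = A j := by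
  obtain ⟨n, rfl⟩ := Nat.exists_eq_succ_of_ne_zero (NeZero.ne n)
  induction k using Fin.induction with
  | zero => simp
  | succ k ih =>
    rw [← Fin.coeSucc_eq_succ, ← ih, hA (fun l => j l + k.castSucc)]
    simp only [add_assoc]

lemma cons_add_const {m n : ℕ} [NeZero n] (t : Fin m → Fin n) (i : Fin n) :
    (Fin.cons i (t + fun _ => i) : Fin (m + 1) → Fin n) =
      fun l => (Fin.cons 0 t : Fin (m + 1) → Fin n) l + i := by
  funext l
  cases l using Fin.cases <;> simp

lemma sum_mul_prod_eq_sum_root_mul_sum_shift {m n : ℕ} [NeZero n] {A : (Fin (m + 1) → Fin n) → ℝ}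
    (hA : ∀ j, A j = A (fun l => j l + 1)) (x : Fin n → ℝ) :
    ∑ j : Fin (m + 1) → Fin n, A j * ∏ l, x (j l)
      = ∑ t : Fin m → Fin n,
          A (Fin.cons 0 t) * ∑ i, ∏ l, x ((Fin.cons 0 t : Fin (m + 1) → Fin n) l + i) := by
  calc ∑ j : Fin (m + 1) → Fin n, A j * ∏ l, x (j l)
      = ∑ i, ∑ s, A (Fin.cons i s) * ∏ l, x ((Fin.cons i s : Fin (m + 1) → Fin n) l) := by
        rw [← Equiv.sum_comp (Fin.consEquiv fun _ => Fin n), Fintype.sum_prod_type]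
        rfl
    _ = ∑ i, ∑ t : Fin m → Fin n,
          A (Fin.cons 0 t) * ∏ l, x ((Fin.cons 0 t : Fin (m + 1) → Fin n) l + i) := by
        refine sum_congr rfl fun i _ => ?_
        rw [← Equiv.sum_comp (Equiv.addRight fun _ => i)]
        refine sum_congr rfl fun t _ => ?_
        rw [Equiv.coe_addRight, cons_add_const, apply_add_const_of_apply_add_one hA]
    _ = _ := by
        rw [sum_comm]
        simp only [mul_sum]

lemma sum_mul_nonneg_of_dominant {T : Type*} [Fintype T] [DecidableEq T] (a S : T → ℝ)
    (t₀ : T) (K : ℝ) (hdom : (∑ t, if t = t₀ then 0 else |a t|) ≤ a t₀)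
    (hS₀ : S t₀ = K) (hS : ∀ t, |S t| ≤ K) :
    0 ≤ ∑ t, a t * S t := by
  have hK : 0 ≤ K := (abs_nonneg _).trans (hS t₀)
  have hterm (t : T) :
      (if t = t₀ then a t₀ * K else 0) ≤ a t * S t + (if t = t₀ then 0 else |a t|) * K := by
    split_ifs with ht
    · simp [ht, hS₀]
    · have hbound : |a t * S t| ≤ |a t| * K := by
        rw [abs_mul]
        exact mul_le_mul_of_nonneg_left (hS t) (abs_nonneg _)
      linarith [neg_abs_le (a t * S t)]
  have hsum := sum_le_sum fun t (_ : t ∈ univ) => hterm t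
  rw [sum_ite_eq', if_pos (mem_univ _), sum_add_distrib, ← sum_mul] at hsum
  linarith [mul_le_mul_of_nonneg_right hdom hK]

/-- Let the order `m+1` be even and `A ∈ C_{m+1,n}` a circulant tensor with diagonal entry
`c₀` and root tensor `A₁`. If `c₀ ≥ ∑_{(j_1,...,j_m) ≠ (1,...,1)} |α_{j_1...j_m}|`, then
`A` is positive semi-definite. -/
theorem stmt_17 (m n : ℕ) [NeZero n] (hm : Even (m + 1))
    (A : (Fin (m + 1) → Fin n) → ℝ)
    (hA : ∀ j : Fin (m + 1) → Fin n, A j = A (fun l => j l + 1))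
    (hdom : (∑ t : Fin m → Fin n, if t = (fun _ => 0) then 0 else |A (Fin.cons 0 t)|)
      ≤ A (fun _ => 0)) :
    ∀ x : Fin n → ℝ, 0 ≤ ∑ j : Fin (m + 1) → Fin n, A j * ∏ l, x (j l) := by
  intro x
  have hdiag : (Fin.cons 0 (fun _ => 0) : Fin (m + 1) → Fin n) = fun _ => 0 := by
    funext l
    cases l using Fin.cases <;> rfl
  rw [sum_mul_prod_eq_sum_root_mul_sum_shift hA]
  refine sum_mul_nonneg_of_dominant _ _ (fun _ => 0) (∑ i, |x i| ^ (m + 1)) (hdiag ▸ hdom) ?_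
    fun t => abs_sum_prod_add_le_sum_abs_pow x _
  simp [hdiag, hm.pow_abs]
end
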